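/- arXiv:1612.09504 — 10 statements merged into one kernel-verified Lean document; each statement's English description precedes it below -/
import Mathlib

section
/- If a complete lattice L is sup-generated by its coprime elements (every element is the supremum of the set of coprime elements below it), then L is a coframe: finite suprema distribute over arbitrary infima, i.e., for all a ∈ L and S ⊆ L, a ∨ (⨅ S) = ⨅_{s ∈ S} (a ∨ s). -/
def IsCoprimeElt {L : Type*} [CompleteLattice L] (p : L) : Prop :=
  p ≠ ⊥ ∧ ∀ u v : L, p ≤ u ⊔ v → p ≤ u ∨ p ≤ v

/-- If a complete lattice is sup-generated by its coprime elements, then it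
is a coframe: finite suprema distribute over arbitrary infima. -/
theorem coframe_of_coprime_supGenerated {L : Type*} [CompleteLattice L]
    (hgen : ∀ a : L, a = sSup {p | IsCoprimeElt p ∧ p ≤ a}) :
    ∀ (a : L) (S : Set L), a ⊔ sInf S = ⨅ s ∈ S, a ⊔ s := by
  intro a S
  apply le_antisymm
  · exact le_iInf₂ fun s hs => sup_le_sup_left (sInf_le hs) a
  · set b := ⨅ s ∈ S, a ⊔ s with hb
    conv_lhs => rw [hgen b]
    apply sSup_le
    rintro p ⟨hp, hpb⟩
    by_cases hpa : p ≤ a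
    · exact hpa.trans le_sup_left
    · refine le_trans ?_ le_sup_right
      apply le_sInf
      intro s hs
      have := hp.2 a s (hpb.trans (biInf_le _ hs))
      tauto
end

section
/- If a complete lattice L is continuous and sup-generated by its coprime elements, then L is (constructively) completely distributive: every element a is the supremum of all elements totally below a. -/
/-- `x` is way below `a`. -/
def WayBelow {L : Type*} [CompleteLattice L] (x a : L) : Prop :=
  ∀ D : Set L, DirectedOn (· ≤ ·) D → a ≤ sSup D → ∃ d ∈ D, x ≤ d

/-- `x` is totally below `a`. -/
def TotallyBelow {L : Type*} [CompleteLattice L] (x a : L) : Prop :=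
  ∀ B : Set L, a ≤ sSup B → ∃ b ∈ B, x ≤ b

/-!
Every element `a` is the join of the elements way below it, and each of these is in turn the
join of the coprimes below it. So it suffices that a coprime `p` way below `a` is totally below
`a`: if `a ≤ sSup B`, then `a` lies below the directed join of the finite joins of `B`, hence `p`
lies below one finite join, and being coprime, below one of its members.
-/

section

variable {L : Type*} [CompleteLattice L]

theorem IsCoprimeElt.supPrime {p : L} (hp : IsCoprimeElt p) : SupPrime p :=
  ⟨fun hmin => hp.1 hmin.eq_bot, fun u v => hp.2 u v⟩

theorem WayBelow.mono_left {x y a : L} (hxy : x ≤ y) (hya : WayBelow y a) : WayBelow x a :=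
  fun D hD haD => (hya D hD haD).imp fun _ ⟨hd, hyd⟩ => ⟨hd, hxy.trans hyd⟩

theorem TotallyBelow.le {x a : L} (hxa : TotallyBelow x a) : x ≤ a := by
  obtain ⟨b, rfl, hxb⟩ := hxa {a} sSup_singleton.ge
  exact hxb

theorem IsCoprimeElt.totallyBelow_of_wayBelow {p a : L} (hp : IsCoprimeElt p)
    (hpa : WayBelow p a) : TotallyBelow p a := by
  intro B haB
  let finiteSup : Finset B → L := fun s => s.sup Subtype.val
  have hdir : DirectedOn (· ≤ ·) (Set.range finiteSup) :=
    directedOn_range.2 (Monotone.directed_le fun _ _ hst => Finset.sup_mono hst)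
  have hle : a ≤ sSup (Set.range finiteSup) :=
    haB.trans <| sSup_le fun b hb =>
      le_sSup_of_le ⟨{⟨b, hb⟩}, rfl⟩ (by simp [finiteSup])
  obtain ⟨_, ⟨s, rfl⟩, hps⟩ := hpa _ hdir hle
  obtain ⟨b, -, hpb⟩ := hp.supPrime.le_finset_sup.1 hps
  exact ⟨b, b.2, hpb⟩

end

/-- A continuous complete lattice sup-generated by its coprime elements is
constructively completely distributive. -/
theorem ccd_of_continuous_coprime_supGenerated {L : Type*} [CompleteLattice L]
    (hcont : ∀ a : L, DirectedOn (· ≤ ·) {x | WayBelow x a} ∧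
      a = sSup {x | WayBelow x a})
    (hgen : ∀ a : L, a = sSup {p | IsCoprimeElt p ∧ p ≤ a}) :
    ∀ a : L, a = sSup {x | TotallyBelow x a} := by
  intro a
  refine le_antisymm ?_ (sSup_le fun _ hx => hx.le)
  calc a = sSup {x | WayBelow x a} := (hcont a).2
    _ ≤ _ := sSup_le fun x hxa => (hgen x).trans_le <| sSup_le fun p ⟨hp, hpx⟩ =>
      le_sSup (hp.totallyBelow_of_wayBelow (hxa.mono_left hpx))
end

section
/- In a complete lattice sup-generated by its coprime elements, if an element p is coprime and p ≤ x ≪ a for some x (where ≪ is the way-below relation), then p is totally below a. -/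
/-
A coprime element below a finite join lies below one of the joinands. Given `a ≤ sSup B`, the
finite joins of subsets of `B` form a directed set whose supremum is still above `a`, so `x ≪ a`
puts `x`, hence `p`, below one such finite join, and coprimality picks out a single element of `B`.
-/

section

variable {L : Type*} [CompleteLattice L]

lemma IsCoprimeElt.exists_le_of_le_finset_sup {ι : Type*} {p : L} (hp : IsCoprimeElt p)
    {s : Finset ι} {f : ι → L} (h : p ≤ s.sup f) : ∃ i ∈ s, p ≤ f i := by
  refine Finset.sup_induction (p := fun y => p ≤ y → ∃ i ∈ s, p ≤ f i) ?_ ?_ ?_ h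
  · exact fun hbot => absurd (le_bot_iff.mp hbot) hp.1
  · intro u hu v hv huv
    exact (hp.2 u v huv).elim hu hv
  · exact fun i hi hpi => ⟨i, hi, hpi⟩

lemma directedOn_finset_sup_image (B : Set L) :
    DirectedOn (· ≤ ·) ((fun F : Finset L => F.sup id) '' {F | ↑F ⊆ B}) := by
  classical
  rintro _ ⟨F, hF, rfl⟩ _ ⟨G, hG, rfl⟩
  refine ⟨(F ∪ G).sup id, ⟨F ∪ G, ?_, rfl⟩,
    Finset.sup_mono Finset.subset_union_left, Finset.sup_mono Finset.subset_union_right⟩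
  show ((F ∪ G : Finset L) : Set L) ⊆ B
  rw [Finset.coe_union]
  exact Set.union_subset hF hG

lemma sSup_le_sSup_finset_sup_image (B : Set L) :
    sSup B ≤ sSup ((fun F : Finset L => F.sup id) '' {F | ↑F ⊆ B}) :=
  sSup_le fun b hb => le_sSup_of_le ⟨{b}, by simpa using hb, rfl⟩ (by simp)

lemma WayBelow.exists_finset_subset_le_sup {x a : L} (h : WayBelow x a) {B : Set L}
    (hB : a ≤ sSup B) : ∃ F : Finset L, ↑F ⊆ B ∧ x ≤ F.sup id := by
  obtain ⟨_, ⟨F, hFB, rfl⟩, hxF⟩ :=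
    h _ (directedOn_finset_sup_image B) (hB.trans (sSup_le_sSup_finset_sup_image B))
  exact ⟨F, hFB, hxF⟩

end

theorem totallyBelow_of_coprime_le_wayBelow_general {L : Type*} [CompleteLattice L]
    {p x a : L} (hp : IsCoprimeElt p) (hpx : p ≤ x) (hxa : WayBelow x a) :
    TotallyBelow p a := by
  intro B hB
  obtain ⟨F, hFB, hxF⟩ := hxa.exists_finset_subset_le_sup hB
  obtain ⟨b, hbF, hpb⟩ := hp.exists_le_of_le_finset_sup (hpx.trans hxF)
  exact ⟨b, hFB hbF, hpb⟩

/-- In a complete lattice sup-generated by coprimes, a coprime `p` with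
`p ≤ x ≪ a` is totally below `a`. -/
theorem totallyBelow_of_coprime_le_wayBelow {L : Type*} [CompleteLattice L]
    (hgen : ∀ a : L, a = sSup {p | IsCoprimeElt p ∧ p ≤ a})
    {p x a : L} (hp : IsCoprimeElt p) (hpx : p ≤ x) (hxa : WayBelow x a) :
    TotallyBelow p a :=
  totallyBelow_of_coprime_le_wayBelow_general hp hpx hxa
end

section
/- Let V be a quantale and c : P(X) → V^X monotone. Then c satisfies the transitivity condition (T): for all A, B ⊆ X and x ∈ X, (⋀_{y ∈ B}(cA)(y)) ⊗ (cB)(x) ≤ (cA)(x), if and only if c̄ ≤ c pointwise, where (c̄A)(x) = ⋁_{v ∈ V} v ⊗ c(c^v A)(x) and c^v A = {z ∈ X | v ≤ (cA)(z)}. -/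
def cbar {V : Type*} [CompleteLattice V] [Monoid V] {X : Type*}
    (c : Set X → X → V) (A : Set X) (x : X) : V :=
  ⨆ v : V, v * c {z | v ≤ c A z} x

/-- A monotone `c` satisfies the transitivity condition (T) iff `c̄ ≤ c`. -/
theorem transitive_iff_cbar_le {V : Type*} [CompleteLattice V] [Monoid V]
    (hm : ∀ (a : V) (s : Set V), a * sSup s = ⨆ b ∈ s, a * b)
    (hm' : ∀ (a : V) (s : Set V), sSup s * a = ⨆ b ∈ s, b * a)
    {X : Type*} (c : Set X → X → V)
    (hmono : ∀ A B : Set X, B ⊆ A → ∀ x, c B x ≤ c A x) :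
    (∀ (A B : Set X) (x : X), (⨅ y ∈ B, c A y) * c B x ≤ c A x) ↔
      (∀ (A : Set X) (x : X), cbar c A x ≤ c A x) := by
  have mono_left : ∀ a b e : V, a ≤ b → a * e ≤ b * e := by
    intro a b e h
    have : sSup {a, b} * e = ⨆ d ∈ ({a, b} : Set V), d * e := hm' e {a, b}
    rw [sSup_pair, sup_eq_right.2 h] at this
    rw [this]
    exact le_biSup (fun d => d * e) (Set.mem_insert a {b})
  have mono_right : ∀ a b e : V, a ≤ b → e * a ≤ e * b := by
    intro a b e h
    have : e * sSup {a, b} = ⨆ d ∈ ({a, b} : Set V), e * d := hm e {a, b}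
    rw [sSup_pair, sup_eq_right.2 h] at this
    rw [this]
    exact le_biSup (fun d => e * d) (Set.mem_insert a {b})
  constructor
  · intro hT A x
    refine iSup_le fun v => ?_
    calc v * c {z | v ≤ c A z} x
        ≤ (⨅ y ∈ {z | v ≤ c A z}, c A y) * c {z | v ≤ c A z} x :=
          mono_left _ _ _ (le_iInf₂ fun y hy => hy)
      _ ≤ c A x := hT A _ x
  · intro hB A B x
    set v := ⨅ y ∈ B, c A y with hv
    have hsub : B ⊆ {z | v ≤ c A z} := fun z hz => biInf_le (c A) hz
    calc v * c B x ≤ v * c {z | v ≤ c A z} x :=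
          mono_right _ _ _ (hmono _ _ hsub x)
      _ ≤ cbar c A x := le_iSup (fun w => w * c {z | w ≤ c A z} x) v
      _ ≤ c A x := hB A x
end

section
/- If the quantale V is sup-generated by its coprime elements and c : P(X) → V^X is monotone, then (c̄A)(x) = ⋁_{p coprime} p ⊗ c(c^p A)(x) for all A ⊆ X and x ∈ X. -/
/-- If the quantale `V` is sup-generated by its coprime elements and `c` is
monotone, then `c̄` is the supremum over coprime elements only. -/
theorem cbar_eq_coprime_sup {V : Type*} [CompleteLattice V] [Monoid V]
    (hm : ∀ (a : V) (s : Set V), a * sSup s = ⨆ b ∈ s, a * b)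
    (hm' : ∀ (a : V) (s : Set V), sSup s * a = ⨆ b ∈ s, b * a)
    (hgen : ∀ v : V, v = sSup {p | IsCoprimeElt p ∧ p ≤ v})
    {X : Type*} (c : Set X → X → V)
    (hmono : ∀ A B : Set X, B ⊆ A → ∀ x, c B x ≤ c A x) :
    ∀ (A : Set X) (x : X),
      cbar c A x = ⨆ p ∈ {p : V | IsCoprimeElt p}, p * c {z | p ≤ c A z} x := by
  intro A x
  apply le_antisymm
  · apply iSup_le
    intro v
    have h1 : v * c {z | v ≤ c A z} x
        = ⨆ p ∈ {p : V | IsCoprimeElt p ∧ p ≤ v}, p * c {z | v ≤ c A z} x := by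
      have h2 := hm' (c {z | v ≤ c A z} x) {p | IsCoprimeElt p ∧ p ≤ v}
      rw [← hgen v] at h2
      exact h2
    rw [h1]
    apply iSup_le; intro p; apply iSup_le; intro hp
    have hsub : {z | v ≤ c A z} ⊆ {z | p ≤ c A z} := fun z hz =>
      le_trans hp.2 hz
    calc p * c {z | v ≤ c A z} x ≤ p * c {z | p ≤ c A z} x := by
          have hle := hmono _ _ hsub x
          have h3 := hm p {c {z | v ≤ c A z} x, c {z | p ≤ c A z} x}
          rw [sSup_pair, sup_eq_right.mpr hle] at h3
          rw [h3]
          exact le_iSup₂ (f := fun b (_ : b ∈ ({c {z | v ≤ c A z} x,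
            c {z | p ≤ c A z} x} : Set V)) => p * b) _ (Or.inl rfl)
      _ ≤ ⨆ p ∈ {p : V | IsCoprimeElt p}, p * c {z | p ≤ c A z} x :=
          le_iSup₂ (f := fun p _ => p * c {z | p ≤ c A z} x) p hp.1
  · apply iSup_le; intro p; apply iSup_le; intro _
    exact le_iSup (fun v => v * c {z | v ≤ c A z} x) p
end

section
/- Let V be a quantale sup-generated by its coprime elements, and let (X, c) be a V-valued pretopological space (c satisfies reflexivity (R) and finite additivity (A)). Then (X, c̄) is also a V-valued pretopological space: c̄ satisfies (R) and (A). -/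
/-- If `V` is sup-generated by coprimes and `(X,c)` is a `V`-valued
pretopological space, then so is `(X, c̄)`. -/
theorem cbar_pretopological {V : Type*} [CompleteLattice V] [Monoid V]
    (hm : ∀ (a : V) (s : Set V), a * sSup s = ⨆ b ∈ s, a * b)
    (hm' : ∀ (a : V) (s : Set V), sSup s * a = ⨆ b ∈ s, b * a)
    (hgen : ∀ v : V, v = sSup {p | IsCoprimeElt p ∧ p ≤ v})
    {X : Type*} (c : Set X → X → V)
    (hrefl : ∀ (A : Set X) (x : X), x ∈ A → (1 : V) ≤ c A x)
    (hempty : ∀ x : X, c ∅ x = ⊥)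
    (hadd : ∀ (A B : Set X) (x : X), c (A ∪ B) x = c A x ⊔ c B x) :
    (∀ (A : Set X) (x : X), x ∈ A → (1 : V) ≤ cbar c A x) ∧
      (∀ x : X, cbar c ∅ x = ⊥) ∧
      (∀ (A B : Set X) (x : X),
        cbar c (A ∪ B) x = cbar c A x ⊔ cbar c B x) := by
  -- multiplication preserves ⊥
  have mul_bot : ∀ a : V, a * ⊥ = ⊥ := fun a => by
    have := hm a ∅; simpa using this
  have bot_mul : ∀ a : V, ⊥ * a = ⊥ := fun a => by
    have := hm' a ∅; simpa using this
  -- monotonicity of multiplication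
  have lmono : ∀ {a b : V}, a ≤ b → ∀ w : V, a * w ≤ b * w := by
    intro a b hab w
    have h1 : sSup ({a, b} : Set V) = b := by
      rw [sSup_pair]; exact sup_eq_right.mpr hab
    have h2 := hm' w ({a, b} : Set V)
    rw [h1] at h2
    rw [h2]
    exact le_biSup (f := fun x => x * w) (Set.mem_insert a _)
  have rmono : ∀ {a b : V}, a ≤ b → ∀ w : V, w * a ≤ w * b := by
    intro a b hab w
    have h1 : sSup ({a, b} : Set V) = b := by
      rw [sSup_pair]; exact sup_eq_right.mpr hab
    have h2 := hm w ({a, b} : Set V)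
    rw [h1] at h2
    rw [h2]
    exact le_biSup (f := fun x => w * x) (Set.mem_insert a _)
  have mul_sup : ∀ a u v : V, a * (u ⊔ v) = a * u ⊔ a * v := by
    intro a u v
    have h := hm a ({u, v} : Set V)
    rw [sSup_pair] at h
    rw [h, iSup_pair]
  -- c is monotone
  have cmono : ∀ {A B : Set X}, A ⊆ B → ∀ x, c A x ≤ c B x := by
    intro A B hAB x
    have h : c B x = c A x ⊔ c B x := by
      conv_lhs => rw [← Set.union_eq_self_of_subset_left hAB, hadd]
    rw [h]; exact le_sup_left
  -- cbar is monotone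
  have cbarmono : ∀ {A B : Set X}, A ⊆ B → ∀ x, cbar c A x ≤ cbar c B x := by
    intro A B hAB x
    refine iSup_mono fun v => rmono (cmono (fun z hz => le_trans hz (cmono hAB z)) x) v
  refine ⟨?_, ?_, ?_⟩
  · -- reflexivity
    intro A x hx
    have h1 : (1 : V) ≤ c {z | (1 : V) ≤ c A z} x :=
      hrefl _ x (hrefl A x hx)
    calc (1 : V) ≤ 1 * c {z | (1 : V) ≤ c A z} x := by rw [one_mul]; exact h1
      _ ≤ cbar c A x := le_iSup (fun v : V => v * c {z | v ≤ c A z} x) 1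
  · -- empty set
    intro x
    refine le_bot_iff.mp (iSup_le fun v => ?_)
    by_cases hv : v = ⊥
    · rw [hv, bot_mul]
    · have hset : {z | v ≤ c (∅ : Set X) z} = (∅ : Set X) := by
        ext z
        simp only [Set.mem_setOf_eq, hempty, le_bot_iff, Set.mem_empty_iff_false, iff_false]
        exact hv
      rw [hset, hempty, mul_bot]
  · -- additivity
    intro A B x
    refine le_antisymm ?_ (sup_le (cbarmono Set.subset_union_left x)
      (cbarmono Set.subset_union_right x))
    refine iSup_le fun v => ?_
    calc v * c {z | v ≤ c (A ∪ B) z} x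
        = ⨆ p ∈ {p : V | IsCoprimeElt p ∧ p ≤ v}, p * c {z | v ≤ c (A ∪ B) z} x := by
          have h := hm' (c {z | v ≤ c (A ∪ B) z} x) {p : V | IsCoprimeElt p ∧ p ≤ v}
          rw [← hgen v] at h
          exact h
      _ ≤ cbar c A x ⊔ cbar c B x := by
          refine iSup₂_le fun p hp => ?_
          obtain ⟨⟨hpbot, hpcop⟩, hpv⟩ := hp
          have hsub : {z | v ≤ c (A ∪ B) z} ⊆ {z | p ≤ c (A ∪ B) z} :=
            fun z hz => le_trans hpv hz
          have hset : {z | p ≤ c (A ∪ B) z} = {z | p ≤ c A z} ∪ {z | p ≤ c B z} := by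
            ext z
            simp only [Set.mem_setOf_eq, Set.mem_union, hadd]
            constructor
            · exact hpcop _ _
            · rintro (h | h)
              · exact le_trans h le_sup_left
              · exact le_trans h le_sup_right
          calc p * c {z | v ≤ c (A ∪ B) z} x
              ≤ p * c {z | p ≤ c (A ∪ B) z} x := rmono (cmono hsub x) p
            _ = p * c {z | p ≤ c A z} x ⊔ p * c {z | p ≤ c B z} x := by
                rw [hset, hadd, mul_sup]
            _ ≤ cbar c A x ⊔ cbar c B x :=
                sup_le
                  (le_trans (le_iSup (fun w : V => w * c {z | w ≤ c A z} x) p) le_sup_left)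
                  (le_trans (le_iSup (fun w : V => w * c {z | w ≤ c B z} x) p) le_sup_right)
end

section
/- Let V be a quantale that is a coframe (binary joins distribute over arbitrary infima) and (X, c) a V-valued closure space. Define the finitely additive core c⁺ by (c⁺A)(x) = ⋀ over finite covers (M_1,…,M_m) of A of (cM_1)(x) ∨ … ∨ (cM_m)(x). Then c⁺ satisfies reflexivity (R): x ∈ A implies k ≤ (c⁺A)(x), and finite additivity: (c⁺∅)(x) = ⊥ and c⁺(A ∪ B)(x) = (c⁺A)(x) ∨ (c⁺B)(x). -/
/-- The finitely additive core of `c`: infimum over finite covers of `A`. -/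
def cplus {V : Type*} [CompleteLattice V] {X : Type*}
    (c : Set X → X → V) (A : Set X) (x : X) : V :=
  sInf {v | ∃ l : List (Set X), l.foldr (· ∪ ·) ∅ = A ∧
    v = (l.map (fun M => c M x)).foldr (· ⊔ ·) ⊥}

section Aux

variable {V : Type*} [CompleteLattice V] {X : Type*}

lemma foldr_union_append (l1 l2 : List (Set X)) :
    (l1 ++ l2).foldr (· ∪ ·) ∅ = l1.foldr (· ∪ ·) ∅ ∪ l2.foldr (· ∪ ·) ∅ := by
  induction l1 with
  | nil => simp
  | cons h t ih => simp [ih, Set.union_assoc]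

lemma foldr_sup_append (l1 l2 : List V) :
    (l1 ++ l2).foldr (· ⊔ ·) ⊥ = l1.foldr (· ⊔ ·) ⊥ ⊔ l2.foldr (· ⊔ ·) ⊥ := by
  induction l1 with
  | nil => simp
  | cons h t ih => simp [ih, sup_assoc]

lemma le_foldr_sup {f : Set X → V} {M : Set X} {l : List (Set X)} (h : M ∈ l) :
    f M ≤ (l.map f).foldr (· ⊔ ·) ⊥ := by
  induction l with
  | nil => simp at h
  | cons a t ih =>
    rcases List.mem_cons.mp h with h | h
    · subst h; exact le_sup_left
    · exact (ih h).trans le_sup_right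

lemma foldr_sup_mono {f g : Set X → V} {l : List (Set X)} (h : ∀ M ∈ l, f M ≤ g M) :
    (l.map f).foldr (· ⊔ ·) ⊥ ≤ (l.map g).foldr (· ⊔ ·) ⊥ := by
  induction l with
  | nil => simp
  | cons a t ih =>
    simp only [List.map_cons, List.foldr_cons]
    exact sup_le_sup (h a (by simp)) (ih fun M hM => h M (by simp [hM]))

lemma mem_foldr_union {x : X} {l : List (Set X)} (h : x ∈ l.foldr (· ∪ ·) ∅) :
    ∃ M ∈ l, x ∈ M := by
  induction l with
  | nil => simp at h
  | cons a t ih =>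
    rcases h with h | h
    · exact ⟨a, by simp, h⟩
    · obtain ⟨M, hM, hx⟩ := ih h
      exact ⟨M, by simp [hM], hx⟩

lemma foldr_union_inter (l : List (Set X)) (A : Set X) :
    (l.map (· ∩ A)).foldr (· ∪ ·) ∅ = l.foldr (· ∪ ·) ∅ ∩ A := by
  induction l with
  | nil => simp
  | cons a t ih => simp [ih, Set.union_inter_distrib_right]

end Aux

/-- Over a quantale that is a coframe, the finitely additive core `c⁺` of a
`V`-valued closure space structure is reflexive and finitely additive. -/
theorem cplus_reflexive_additive {V : Type*} [CompleteLattice V] [Monoid V]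
    (hm : ∀ (a : V) (s : Set V), a * sSup s = ⨆ b ∈ s, a * b)
    (hm' : ∀ (a : V) (s : Set V), sSup s * a = ⨆ b ∈ s, b * a)
    (hcoframe : ∀ (a : V) (S : Set V), a ⊔ sInf S = ⨅ s ∈ S, a ⊔ s)
    {X : Type*} (c : Set X → X → V)
    (hrefl : ∀ (A : Set X) (x : X), x ∈ A → (1 : V) ≤ c A x)
    (htrans : ∀ (A B : Set X) (x : X), (⨅ y ∈ B, c A y) * c B x ≤ c A x) :
    (∀ (A : Set X) (x : X), x ∈ A → (1 : V) ≤ cplus c A x) ∧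
      (∀ x : X, cplus c ∅ x = ⊥) ∧
      (∀ (A B : Set X) (x : X),
        cplus c (A ∪ B) x = cplus c A x ⊔ cplus c B x) := by
  -- multiplication is monotone on the left factor
  have hmul_mono : ∀ {p q : V} (a : V), p ≤ q → p * a ≤ q * a := by
    intro p q a h
    have hq : q = sSup {p, q} := by
      rw [sSup_pair, sup_eq_right.mpr h]
    calc p * a ≤ ⨆ b ∈ ({p, q} : Set V), b * a := by
          refine le_iSup₂_of_le p (by simp) le_rfl
      _ = sSup {p, q} * a := (hm' a _).symm
      _ = q * a := by rw [← hq]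
  -- c is monotone
  have hmono : ∀ (A B : Set X) (x : X), A ⊆ B → c A x ≤ c B x := by
    intro A B x hAB
    have h1 : (1 : V) ≤ ⨅ y ∈ A, c B y :=
      le_iInf fun y => le_iInf fun hy => hrefl B y (hAB hy)
    calc c A x = 1 * c A x := (one_mul _).symm
      _ ≤ (⨅ y ∈ A, c B y) * c A x := hmul_mono _ h1
      _ ≤ c B x := htrans B A x
  -- cplus is monotone
  have hcmono : ∀ (A C : Set X) (x : X), A ⊆ C → cplus c A x ≤ cplus c C x := by
    intro A C x hAC
    refine le_sInf fun v ⟨l, hl, hv⟩ => ?_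
    have hcover : (l.map (· ∩ A)).foldr (· ∪ ·) ∅ = A := by
      rw [foldr_union_inter, hl, Set.inter_eq_right.mpr hAC]
    have hmem : ((l.map (· ∩ A)).map (fun M => c M x)).foldr (· ⊔ ·) ⊥ ∈
        {v | ∃ l' : List (Set X), l'.foldr (· ∪ ·) ∅ = A ∧
          v = (l'.map (fun M => c M x)).foldr (· ⊔ ·) ⊥} :=
      ⟨l.map (· ∩ A), hcover, rfl⟩
    refine (sInf_le hmem).trans ?_
    rw [hv, List.map_map]
    exact foldr_sup_mono fun M _ => hmono (M ∩ A) M x Set.inter_subset_left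
  refine ⟨?_, ?_, ?_⟩
  · -- reflexivity
    intro A x hx
    refine le_sInf fun v ⟨l, hl, hv⟩ => ?_
    obtain ⟨M, hM, hxM⟩ := mem_foldr_union (hl ▸ hx)
    exact (hrefl M x hxM).trans (hv ▸ le_foldr_sup (f := fun M => c M x) hM)
  · -- empty
    intro x
    refine le_bot_iff.mp (sInf_le ?_)
    exact ⟨[], rfl, rfl⟩
  · -- additivity
    intro A B x
    refine le_antisymm ?_ (sup_le (hcmono A (A ∪ B) x Set.subset_union_left)
      (hcmono B (A ∪ B) x Set.subset_union_right))
    unfold cplus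
    rw [sup_comm, hcoframe]
    refine le_iInf₂ fun a ⟨la, hla, hva⟩ => ?_
    rw [sup_comm, hcoframe]
    refine le_iInf₂ fun b ⟨lb, hlb, hvb⟩ => ?_
    refine sInf_le ⟨la ++ lb, ?_, ?_⟩
    · rw [foldr_union_append, hla, hlb]
    · rw [List.map_append, foldr_sup_append, hva, hvb]
end

section
/- Let V be a quantale, (X, c) a V-valued closure space, (Y, d) a V-valued topological space (d satisfies (R), (T), and finite additivity), and g : (Y, d) → (X, c) continuous. Then g is continuous as a map (Y, d) → (X, c⁺), i.e., (dC)(y) ≤ c⁺(gC)(gy) for all C ⊆ Y, y ∈ Y, where c⁺ is the finitely additive core of c. -/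
/-- A continuous map from a `V`-valued topological space `(Y,d)` into a
`V`-valued closure space `(X,c)` is also continuous into `(X, c⁺)`. -/
theorem continuous_into_cplus {V : Type*} [CompleteLattice V] [Monoid V]
    (hm : ∀ (a : V) (s : Set V), a * sSup s = ⨆ b ∈ s, a * b)
    (hm' : ∀ (a : V) (s : Set V), sSup s * a = ⨆ b ∈ s, b * a)
    {X Y : Type*} (c : Set X → X → V) (d : Set Y → Y → V) (g : Y → X)
    (hcrefl : ∀ (A : Set X) (x : X), x ∈ A → (1 : V) ≤ c A x)
    (hctrans : ∀ (A B : Set X) (x : X), (⨅ y ∈ B, c A y) * c B x ≤ c A x)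
    (hcmono : ∀ A B : Set X, B ⊆ A → ∀ x, c B x ≤ c A x)
    (hdrefl : ∀ (C : Set Y) (y : Y), y ∈ C → (1 : V) ≤ d C y)
    (hdtrans : ∀ (C D : Set Y) (y : Y), (⨅ z ∈ D, d C z) * d D y ≤ d C y)
    (hdempty : ∀ y : Y, d ∅ y = ⊥)
    (hdadd : ∀ (C D : Set Y) (y : Y), d (C ∪ D) y = d C y ⊔ d D y)
    (hg : ∀ (C : Set Y) (y : Y), d C y ≤ c (g '' C) (g y)) :
    ∀ (C : Set Y) (y : Y), d C y ≤ cplus c (g '' C) (g y) := by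
  intro C y
  apply le_sInf
  rintro v ⟨l, hcov, rfl⟩
  have key : ∀ (l : List (Set X)) (C : Set Y),
      C ⊆ g ⁻¹' (l.foldr (· ∪ ·) ∅) →
      d C y ≤ (l.map (fun M => c M (g y))).foldr (· ⊔ ·) ⊥ := by
    intro l
    induction l with
    | nil =>
      intro C hC
      have : C = ∅ := Set.subset_empty_iff.mp hC
      simp [this, hdempty]
    | cons M l ih =>
      intro C hC
      have hsplit : C = (C ∩ g ⁻¹' M) ∪ (C ∩ g ⁻¹' (l.foldr (· ∪ ·) ∅)) := by
        ext z
        constructor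
        · intro hz
          rcases hC hz with h | h
          · exact Or.inl ⟨hz, h⟩
          · exact Or.inr ⟨hz, h⟩
        · rintro (⟨h, _⟩ | ⟨h, _⟩) <;> exact h
      have h1 : d (C ∩ g ⁻¹' M) y ≤ c M (g y) := by
        refine le_trans (hg _ y) (hcmono _ _ ?_ _)
        rintro x ⟨z, ⟨_, hz⟩, rfl⟩
        exact hz
      have h2 := ih (C ∩ g ⁻¹' (l.foldr (· ∪ ·) ∅)) (Set.inter_subset_right)
      calc d C y = d (C ∩ g ⁻¹' M) y ⊔ d (C ∩ g ⁻¹' (l.foldr (· ∪ ·) ∅)) y := by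
            rw [← hdadd, ← hsplit]
        _ ≤ _ := sup_le_sup h1 h2
  apply key
  intro z hz
  simp only [Set.mem_preimage, hcov]
  exact ⟨z, hz, rfl⟩
end

section
/- Let V be a quantale. A map c : P(X) → V^X is a V-valued closure space structure (satisfies (R) and (T)) if and only if for all A, B ⊆ X one has [c_disc B, cA] = [cB, cA], where [σ,τ] = ⋀_{x∈X}[σx, τx] with [v,w] the internal hom of V (u ≤ [v,w] iff u ⊗ v ≤ w), and c_disc B is the function assigning k to points of B and ⊥ elsewhere. -/
/-- Internal hom of a quantale: `[v,w] = ⨆ {u | u ⊗ v ≤ w}`. -/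
def qhom {V : Type*} [CompleteLattice V] [Monoid V] (v w : V) : V :=
  sSup {u | u * v ≤ w}

/-- Hom of the `V`-category `V^X`. -/
def qhomX {V : Type*} [CompleteLattice V] [Monoid V] {X : Type*}
    (σ τ : X → V) : V :=
  ⨅ x, qhom (σ x) (τ x)

/-- The discrete structure: `k` on points of `B`, `⊥` elsewhere. -/
def cdisc {V : Type*} [CompleteLattice V] [Monoid V] {X : Type*}
    (B : Set X) (x : X) : V :=
  ⨆ _ : x ∈ B, (1 : V)

section aux
variable {V : Type*} [CompleteLattice V] [Monoid V]

lemma le_qhom {u v w : V} (h : u * v ≤ w) : u ≤ qhom v w := le_sSup h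

lemma qhom_mul_le (hm' : ∀ (a : V) (s : Set V), sSup s * a = ⨆ b ∈ s, b * a)
    (v w : V) : qhom v w * v ≤ w := by
  rw [qhom, hm']
  exact iSup₂_le fun b hb => hb

lemma qhom_one (w : V) : qhom (1 : V) w = w := by
  refine le_antisymm (sSup_le fun u hu => by simpa using hu) (le_sSup (by simp))

lemma mul_mono_right (hm : ∀ (a : V) (s : Set V), a * sSup s = ⨆ b ∈ s, a * b)
    {b b' : V} (h : b ≤ b') (a : V) : a * b ≤ a * b' := by
  have h1 : a * b' = a * sSup {b, b'} := by rw [sSup_pair, sup_eq_right.mpr h]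
  rw [h1, hm]
  exact le_biSup (fun x => a * x) (Set.mem_insert b {b'})

lemma mul_mono_left (hm' : ∀ (a : V) (s : Set V), sSup s * a = ⨆ b ∈ s, b * a)
    {b b' : V} (h : b ≤ b') (a : V) : b * a ≤ b' * a := by
  have h1 : b' * a = sSup {b, b'} * a := by rw [sSup_pair, sup_eq_right.mpr h]
  rw [h1, hm']
  exact le_biSup (fun x => x * a) (Set.mem_insert b {b'})

lemma mul_bot' (hm : ∀ (a : V) (s : Set V), a * sSup s = ⨆ b ∈ s, a * b)
    (a : V) : a * ⊥ = ⊥ := by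
  have := hm a ∅
  simpa using this

end aux

/-- `c` is a `V`-valued closure space structure iff
`[c_disc B, cA] = [cB, cA]` for all `A, B`. -/
theorem closure_iff_hom_eq {V : Type*} [CompleteLattice V] [Monoid V]
    (hm : ∀ (a : V) (s : Set V), a * sSup s = ⨆ b ∈ s, a * b)
    (hm' : ∀ (a : V) (s : Set V), sSup s * a = ⨆ b ∈ s, b * a)
    {X : Type*} (c : Set X → X → V) :
    ((∀ (A : Set X) (x : X), x ∈ A → (1 : V) ≤ c A x) ∧
      (∀ (A B : Set X) (x : X), (⨅ y ∈ B, c A y) * c B x ≤ c A x)) ↔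
      (∀ A B : Set X, qhomX (cdisc B) (c A) = qhomX (c B) (c A)) := by
  have cdisc_mem : ∀ (B : Set X) (x : X), x ∈ B → cdisc (V := V) B x = 1 := by
    intro B x hx; simp [cdisc, hx]
  have cdisc_not_mem : ∀ (B : Set X) (x : X), x ∉ B → cdisc (V := V) B x = ⊥ := by
    intro B x hx; simp [cdisc, hx]
  constructor
  · rintro ⟨hR, hT⟩ A B
    refine le_antisymm ?_ ?_
    · -- qhomX (cdisc B) (cA) ≤ qhomX (cB) (cA)
      set u := qhomX (cdisc B) (c A) with hu
      have hub : u ≤ ⨅ y ∈ B, c A y := by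
        refine le_iInf₂ fun y hy => ?_
        have h1 : u ≤ qhom (cdisc B y) (c A y) := iInf_le _ y
        rwa [cdisc_mem B y hy, qhom_one] at h1
      refine le_iInf fun x => le_qhom ?_
      calc u * c B x ≤ (⨅ y ∈ B, c A y) * c B x := mul_mono_left hm' hub _
        _ ≤ c A x := hT A B x
    · set u := qhomX (c B) (c A) with hu
      refine le_iInf fun x => le_qhom ?_
      by_cases hx : x ∈ B
      · rw [cdisc_mem B x hx, mul_one]
        have h1 : u = u * 1 := (mul_one u).symm
        calc u = u * 1 := (mul_one u).symm
          _ ≤ u * c B x := mul_mono_right hm (hR B x hx) u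
          _ ≤ qhom (c B x) (c A x) * c B x := mul_mono_left hm' (iInf_le _ x) _
          _ ≤ c A x := qhom_mul_le hm' _ _
      · rw [cdisc_not_mem B x hx, mul_bot' hm]
        exact bot_le
  · intro H
    constructor
    · intro A x hx
      have h1 : (1 : V) ≤ qhomX (c A) (c A) :=
        le_iInf fun y => le_qhom (by rw [one_mul])
      rw [← H A A] at h1
      have h2 : qhomX (cdisc A) (c A) ≤ qhom (cdisc A x) (c A x) := iInf_le _ x
      rw [cdisc_mem A x hx, qhom_one] at h2
      exact h1.trans h2
    · intro A B x
      set u := ⨅ y ∈ B, c A y with hu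
      have h1 : u ≤ qhomX (cdisc B) (c A) := by
        refine le_iInf fun z => le_qhom ?_
        by_cases hz : z ∈ B
        · rw [cdisc_mem B z hz, mul_one]
          exact iInf₂_le z hz
        · rw [cdisc_not_mem B z hz, mul_bot' hm]
          exact bot_le
      rw [H A B] at h1
      calc u * c B x ≤ qhom (c B x) (c A x) * c B x :=
            mul_mono_left hm' (h1.trans (iInf_le _ x)) _
        _ ≤ c A x := qhom_mul_le hm' _ _
end

section
/- Let V be a quantale and c : P(X) → V^X a V-valued closure space structure (satisfying (R) and (T)). Then c is a V-functor from (P(X), hom(A,B) = [c_disc A, c_disc B]) to (V^X, [σ,τ] = ⋀_x [σx, τx]); that is, [c_disc B, c_disc A] ≤ [cB, cA] for all A, B ⊆ X. -/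
/-- A `V`-valued closure space structure `c` is a `V`-functor:
`[c_disc B, c_disc A] ≤ [cB, cA]`. -/
theorem closure_is_Vfunctor {V : Type*} [CompleteLattice V] [Monoid V]
    (hm : ∀ (a : V) (s : Set V), a * sSup s = ⨆ b ∈ s, a * b)
    (hm' : ∀ (a : V) (s : Set V), sSup s * a = ⨆ b ∈ s, b * a)
    {X : Type*} (c : Set X → X → V)
    (hrefl : ∀ (A : Set X) (x : X), x ∈ A → (1 : V) ≤ c A x)
    (htrans : ∀ (A B : Set X) (x : X), (⨅ y ∈ B, c A y) * c B x ≤ c A x) :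
    ∀ A B : Set X,
      qhomX (cdisc B) (cdisc A : X → V) ≤ qhomX (c B) (c A) := by
  intro A B
  -- left-multiplication monotonicity from hm'
  have mono : ∀ {u v : V} (a : V), u ≤ v → u * a ≤ v * a := by
    intro u v a huv
    have h1 : sSup {u, v} = v := by
      rw [sSup_pair, sup_eq_right.mpr huv]
    have h2 := hm' a {u, v}
    rw [h1] at h2
    rw [h2]
    exact le_iSup₂ (f := fun b (_ : b ∈ ({u, v} : Set V)) => b * a) u (by simp)
  set h := qhomX (cdisc B) (cdisc A : X → V) with hh
  have key : h ≤ ⨅ y ∈ B, c A y := by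
    refine le_iInf₂ fun y hy => ?_
    have h1 : h ≤ qhom (cdisc B y) (cdisc A y) := iInf_le _ y
    have h2 : cdisc B y = (1 : V) := by simp [cdisc, hy]
    have h3 : qhom (cdisc B y) (cdisc A y) ≤ c A y := by
      rw [h2]
      refine sSup_le fun u hu => ?_
      have : u ≤ cdisc A y := by simpa using hu
      refine this.trans ?_
      simp only [cdisc]
      exact iSup_le fun hyA => hrefl A y hyA
    exact h1.trans h3
  refine le_iInf fun x => ?_
  refine le_sSup ?_
  show h * c B x ≤ c A x
  exact (mono (c B x) key).trans (htrans A B x)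
end
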